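/- arXiv:2505.04558 — 3 statements merged into one kernel-verified Lean document; each statement's English description precedes it below -/
import Mathlib

section
/- For any finite set X ⊆ ℝ² with at least two points and any x ∈ X, there exists y ∈ X with y ≠ x such that the edge (x, y) is 0-order pure, i.e., K_p(x, y) = 0. -/
open scoped Classical
open scoped RealInnerProductSpace

theorem stmt_2 (X : Finset (EuclideanSpace ℝ (Fin 2))) (hcard : 2 ≤ X.card)
    (x : EuclideanSpace ℝ (Fin 2)) (hx : x ∈ X) :
    ∃ y ∈ X, y ≠ x ∧ ∀ z ∈ X, ¬ (⟪x - z, y - z⟫ < 0) := by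
  have hne : (X.erase x).Nonempty := by
    rw [← Finset.card_pos, Finset.card_erase_of_mem hx]
    omega
  obtain ⟨y, hy, hmin⟩ := X.erase x |>.exists_min_image (fun z => ‖x - z‖) hne
  refine ⟨y, Finset.mem_of_mem_erase hy, Finset.ne_of_mem_erase hy, ?_⟩
  intro z hz hlt
  have hzx : z ≠ x := by
    rintro rfl
    simp [real_inner_self_nonneg] at hlt
  have hzm : z ∈ X.erase x := Finset.mem_erase.2 ⟨hzx, hz⟩
  have hle := hmin z hzm
  have key : ‖x - z‖ ^ 2 < ‖x - z‖ * ‖x - y‖ := by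
    have h1 : (⟪x - z, x - y⟫ : ℝ) + ⟪x - z, y - z⟫ = ‖x - z‖ ^ 2 := by
      rw [← inner_add_right]
      have : (x - y) + (y - z) = x - z := by abel
      rw [this, real_inner_self_eq_norm_sq]
    have h2 : (⟪x - z, x - y⟫ : ℝ) ≤ ‖x - z‖ * ‖x - y‖ := real_inner_le_norm _ _
    linarith
  have hpos : 0 < ‖x - z‖ := by
    rw [norm_pos_iff, sub_ne_zero]
    exact fun h => hzx h.symm
  have : ‖x - z‖ < ‖x - y‖ := by
    nlinarith
  linarith
end

section
/- Let X be a finite set of points in ℝ² and let G₀ be the graph on vertex set X whose edges are exactly the 0-order pure edges, i.e., pairs (x, y) with x ≠ y such that no z ∈ X satisfies ⟨x − z, y − z⟩ < 0. Then G₀ is connected. -/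
open scoped RealInnerProductSpace

private lemma inside_aux {E : Type*} [NormedAddCommGroup E] [InnerProductSpace ℝ E]
    (x y z : E) (h : ⟪x - z, y - z⟫ < 0) : ‖x - z‖ < ‖x - y‖ := by
  refine lt_of_pow_lt_pow_left₀ 2 (norm_nonneg _) ?_
  have h2 : ‖(x - z) - (y - z)‖ ^ 2 = ‖x - z‖ ^ 2 - 2 * ⟪x - z, y - z⟫ + ‖y - z‖ ^ 2 :=
    norm_sub_sq_real _ _
  have h3 : (x - z) - (y - z) = x - y := by abel
  rw [h3] at h2
  nlinarith [sq_nonneg ‖y - z‖]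

theorem stmt_3 (X : Finset (EuclideanSpace ℝ (Fin 2))) (hX : X.Nonempty) :
    (SimpleGraph.fromRel (fun x y : X =>
      ∀ z ∈ X, ¬ (⟪(x : EuclideanSpace ℝ (Fin 2)) - z, (y : EuclideanSpace ℝ (Fin 2)) - z⟫ < 0))).Connected := by
  set G := (SimpleGraph.fromRel (fun x y : X =>
      ∀ z ∈ X, ¬ (⟪(x : EuclideanSpace ℝ (Fin 2)) - z, (y : EuclideanSpace ℝ (Fin 2)) - z⟫ < 0)))
  have key : ∀ n : ℕ, ∀ x y : X,
      ((X ×ˢ X).filter (fun p => dist p.1 p.2 <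
        dist (x : EuclideanSpace ℝ (Fin 2)) (y : EuclideanSpace ℝ (Fin 2)))).card ≤ n →
      G.Reachable x y := by
    intro n
    induction n with
    | zero =>
      intro x y hcard
      by_cases hxy : x = y
      · exact hxy ▸ SimpleGraph.Reachable.refl x
      · apply SimpleGraph.Adj.reachable
        refine ⟨hxy, Or.inl ?_⟩
        intro z hz hlt
        have hclose : dist (x : EuclideanSpace ℝ (Fin 2)) z <
            dist (x : EuclideanSpace ℝ (Fin 2)) (y : EuclideanSpace ℝ (Fin 2)) := by
          rw [dist_eq_norm, dist_eq_norm]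
          exact inside_aux _ _ _ hlt
        have hmem : ((x : EuclideanSpace ℝ (Fin 2)), z) ∈
            (X ×ˢ X).filter (fun p => dist p.1 p.2 <
              dist (x : EuclideanSpace ℝ (Fin 2)) (y : EuclideanSpace ℝ (Fin 2))) := by
          simp [Finset.mem_filter, Finset.mem_product, x.2, hz, hclose]
        have := Finset.card_pos.mpr ⟨_, hmem⟩
        omega
    | succ n ih =>
      intro x y hcard
      by_cases hxy : x = y
      · exact hxy ▸ SimpleGraph.Reachable.refl x
      by_cases hpure : ∀ z ∈ X, ¬ (⟪(x : EuclideanSpace ℝ (Fin 2)) - z,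
          (y : EuclideanSpace ℝ (Fin 2)) - z⟫ < 0)
      · exact SimpleGraph.Adj.reachable ⟨hxy, Or.inl hpure⟩
      · push_neg at hpure
        obtain ⟨z, hzX, hz⟩ := hpure
        set zz : X := ⟨z, hzX⟩
        have hxz : dist (x : EuclideanSpace ℝ (Fin 2)) z <
            dist (x : EuclideanSpace ℝ (Fin 2)) (y : EuclideanSpace ℝ (Fin 2)) := by
          rw [dist_eq_norm, dist_eq_norm]
          exact inside_aux _ _ _ hz
        have hzy : dist z (y : EuclideanSpace ℝ (Fin 2)) <
            dist (x : EuclideanSpace ℝ (Fin 2)) (y : EuclideanSpace ℝ (Fin 2)) := by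
          rw [dist_comm z _, dist_eq_norm, dist_eq_norm,
            show ‖(x : EuclideanSpace ℝ (Fin 2)) - y‖ = ‖(y : EuclideanSpace ℝ (Fin 2)) - x‖
              from (norm_sub_rev _ _)]
          exact inside_aux _ _ _ (by rwa [real_inner_comm] at hz)
        have subcard : ∀ (a b : X),
            dist (a : EuclideanSpace ℝ (Fin 2)) (b : EuclideanSpace ℝ (Fin 2)) <
            dist (x : EuclideanSpace ℝ (Fin 2)) (y : EuclideanSpace ℝ (Fin 2)) →
            ((X ×ˢ X).filter (fun p => dist p.1 p.2 <
              dist (a : EuclideanSpace ℝ (Fin 2)) (b : EuclideanSpace ℝ (Fin 2)))).card ≤ n := by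
          intro a b hab
          have hsub : (X ×ˢ X).filter (fun p => dist p.1 p.2 <
              dist (a : EuclideanSpace ℝ (Fin 2)) (b : EuclideanSpace ℝ (Fin 2))) ⊂
              (X ×ˢ X).filter (fun p => dist p.1 p.2 <
              dist (x : EuclideanSpace ℝ (Fin 2)) (y : EuclideanSpace ℝ (Fin 2))) := by
            constructor
            · intro p hp
              simp only [Finset.mem_filter] at hp ⊢
              exact ⟨hp.1, lt_trans hp.2 hab⟩
            · intro hsub'
              have hmem : ((a : EuclideanSpace ℝ (Fin 2)), (b : EuclideanSpace ℝ (Fin 2))) ∈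
                  (X ×ˢ X).filter (fun p => dist p.1 p.2 <
                  dist (x : EuclideanSpace ℝ (Fin 2)) (y : EuclideanSpace ℝ (Fin 2))) := by
                simp [Finset.mem_filter, Finset.mem_product, a.2, b.2, hab]
              have := hsub' hmem
              simp [Finset.mem_filter] at this
          have := Finset.card_lt_card hsub
          omega
        have r1 : G.Reachable x zz := ih x zz (subcard x zz hxz)
        have r2 : G.Reachable zz y := ih zz y (subcard zz y hzy)
        exact r1.trans r2
  rw [SimpleGraph.connected_iff]
  refine ⟨fun x y => key _ x y le_rfl, ?_⟩
  obtain ⟨a, ha⟩ := hX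
  exact ⟨⟨a, ha⟩⟩
end

section
/- Let X ⊆ ℝ² be finite and suppose X is partitioned into two nonempty sets F₁ and F₂. If f₁ ∈ F₁ and f₂ ∈ F₂ realize the minimum distance between F₁ and F₂ (‖f₁ − f₂‖ ≤ ‖a − b‖ for all a ∈ F₁, b ∈ F₂), then the edge (f₁, f₂) is 0-order pure: no point z ∈ X satisfies ⟨f₁ − z, f₂ − z⟩ < 0. -/
open scoped RealInnerProductSpace

theorem stmt_4 (X F₁ F₂ : Finset (EuclideanSpace ℝ (Fin 2)))
    (hunion : (F₁ : Set (EuclideanSpace ℝ (Fin 2))) ∪ (F₂ : Set (EuclideanSpace ℝ (Fin 2))) = (X : Set (EuclideanSpace ℝ (Fin 2)))) (hdisj : Disjoint F₁ F₂)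
    (h1 : F₁.Nonempty) (h2 : F₂.Nonempty)
    (f₁ f₂ : EuclideanSpace ℝ (Fin 2)) (hf₁ : f₁ ∈ F₁) (hf₂ : f₂ ∈ F₂)
    (hmin : ∀ a ∈ F₁, ∀ b ∈ F₂, ‖f₁ - f₂‖ ≤ ‖a - b‖) :
    ∀ z ∈ X, ¬ (⟪f₁ - z, f₂ - z⟫ < 0) := by
  intro z hz hneg
  have hid : ‖f₁ - f₂‖ ^ 2 = ‖f₁ - z‖ ^ 2 - 2 * ⟪f₁ - z, f₂ - z⟫ + ‖f₂ - z‖ ^ 2 := by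
    have : f₁ - f₂ = (f₁ - z) - (f₂ - z) := by abel
    rw [this, norm_sub_sq_real]
  have h1z : ‖f₁ - z‖ < ‖f₁ - f₂‖ := by
    have hsq : ‖f₁ - z‖ ^ 2 < ‖f₁ - f₂‖ ^ 2 := by nlinarith [sq_nonneg ‖f₂ - z‖]
    nlinarith [norm_nonneg (f₁ - z), norm_nonneg (f₁ - f₂)]
  have h2z : ‖f₂ - z‖ < ‖f₁ - f₂‖ := by
    have hsq : ‖f₂ - z‖ ^ 2 < ‖f₁ - f₂‖ ^ 2 := by nlinarith [sq_nonneg ‖f₁ - z‖]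
    nlinarith [norm_nonneg (f₂ - z), norm_nonneg (f₁ - f₂)]
  have hzX : z ∈ F₁ ∨ z ∈ F₂ := by
    have : z ∈ (F₁ : Set (EuclideanSpace ℝ (Fin 2))) ∪ (F₂ : Set (EuclideanSpace ℝ (Fin 2))) := by
      rw [hunion]; exact_mod_cast hz
    simpa using this
  rcases hzX with hzF | hzF
  · have := hmin z hzF f₂ hf₂
    rw [show z - f₂ = -(f₂ - z) by abel, norm_neg] at this
    linarith
  · have := hmin f₁ hf₁ z hzF
    linarith
end
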